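/- arXiv:1412.7922 — 2 statements merged into one kernel-verified Lean document; each statement's English description precedes it below -/
import Mathlib

section
/- Let G=(V,E,W) be a weighted graph with positive integer edge weights, let ε>0, and for i∈ℕ let b(i)=(1+ε)^i and define rounded weights W_i(e)=b(i)·⌈W(e)/b(i)⌉ with corresponding distance function Wd_i. For nodes v,w let Wd(v,w) be their weighted distance and h_{v,w} the minimum number of hops on a shortest weighted v-w path. Then for i = max{0, ⌊log_{1+ε}(ε·Wd(v,w)/h_{v,w})⌋}, it holds that Wd_i(v,w) < (1+ε)·Wd(v,w). -/
/-- Total weight of a walk under an edge-weight function. -/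
noncomputable def walkWeight {V : Type*} {G : SimpleGraph V} (W : Sym2 V → ℝ)
    {u v : V} (p : G.Walk u v) : ℝ :=
  (p.edges.map W).sum

/-!
Round every edge of `p` up to a multiple of `b = (1+ε)^i`. Each of its `h` edges gains less
than `b`, so `Wd_i(v,w) ≤ W_i(p) < W(p) + h·b`, and the choice of `i` makes `h·b ≤ ε·W(p)`
unless `i = 0`, where `b = 1` and rounding integer weights changes nothing.
-/

lemma mul_ceil_div_lt_add {b : ℝ} (hb : 0 < b) (x : ℝ) : b * ⌈x / b⌉ < x + b := by
  calc b * ⌈x / b⌉ < b * (x / b + 1) := mul_lt_mul_of_pos_left (Int.ceil_lt_add_one _) hb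
    _ = x + b := by field_simp

lemma Int.toNat_floor_logb_eq_zero_or_pow_le {a x : ℝ} (ha : 1 < a) (hx : 0 < x) :
    (⌊Real.logb a x⌋).toNat = 0 ∨ a ^ (⌊Real.logb a x⌋).toNat ≤ x := by
  rcases le_or_gt ⌊Real.logb a x⌋ 0 with hneg | hpos
  · exact .inl (Int.toNat_eq_zero.mpr hneg)
  · right
    have hcast : (((⌊Real.logb a x⌋).toNat : ℕ) : ℝ) = ⌊Real.logb a x⌋ := by
      exact_mod_cast Int.toNat_of_nonneg hpos.le
    rw [← Real.rpow_natCast, ← Real.le_logb_iff_rpow_le ha hx, hcast]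
    exact Int.floor_le _

section

open SimpleGraph.Walk

variable {V : Type*} {G : SimpleGraph V} {u v : V}

lemma walkWeight_nonneg {f : Sym2 V → ℝ} (hf : ∀ e, 0 ≤ f e) (p : G.Walk u v) :
    0 ≤ walkWeight f p :=
  List.sum_nonneg (by simpa using fun e _ => hf e)

lemma walkWeight_pos {f : Sym2 V → ℝ} (hf : ∀ e, 0 < f e) {p : G.Walk u v}
    (hp : 0 < p.length) : 0 < walkWeight f p :=
  List.sum_pos _ (by simpa using fun e _ => hf e) <| by
    simpa using edges_eq_nil.not.mpr (not_nil_iff_lt_length.mpr hp)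

lemma walkWeight_lt_add_length_mul {f g : Sym2 V → ℝ} {c : ℝ} (hfg : ∀ e, f e < g e + c)
    {p : G.Walk u v} (hp : 0 < p.length) :
    walkWeight f p < walkWeight g p + p.length * c := by
  obtain ⟨e, he⟩ := List.exists_mem_of_length_pos (p.length_edges ▸ hp)
  have hconst : (p.edges.map fun _ => c).sum = p.length * c := by
    simp [List.map_const', List.sum_replicate]
  calc walkWeight f p < (p.edges.map fun e => g e + c).sum :=
        List.sum_lt_sum _ _ (fun e _ => (hfg e).le) ⟨e, he, hfg e⟩
    _ = walkWeight g p + p.length * c := by rw [List.sum_map_add, hconst]; rfl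

lemma sInf_walkWeight_le {f : Sym2 V → ℝ} (hf : ∀ e, 0 ≤ f e) (p : G.Walk u v) :
    sInf {x : ℝ | ∃ q : G.Walk u v, x = walkWeight f q} ≤ walkWeight f p :=
  csInf_le ⟨0, by rintro _ ⟨q, rfl⟩; exact walkWeight_nonneg hf q⟩ ⟨p, rfl⟩

end

theorem rounding_distance_bound_general {V : Type*} (G : SimpleGraph V)
    (W : Sym2 V → ℕ) (hW : ∀ e, 0 < W e)
    (ε : ℝ) (hε : 0 < ε) (v w : V) (hvw : v ≠ w)
    (p : G.Walk v w) :
    let Wd : ℝ := walkWeight (fun e => (W e : ℝ)) p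
    let h : ℕ := p.length
    let i : ℕ := (⌊Real.logb (1 + ε) (ε * Wd / h)⌋).toNat
    let b : ℝ := (1 + ε) ^ i
    let Wi : Sym2 V → ℝ := fun e => b * (⌈(W e : ℝ) / b⌉ : ℤ)
    sInf {x : ℝ | ∃ q : G.Walk v w, x = walkWeight Wi q} < (1 + ε) * Wd := by
  intro Wd h i b Wi
  have hh : 0 < h := Nat.pos_of_ne_zero (mt SimpleGraph.Walk.eq_of_length_eq_zero hvw)
  have hWd : 0 < Wd := walkWeight_pos (fun e => by exact_mod_cast hW e) hh
  have hb : 0 < b := by positivity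
  refine (sInf_walkWeight_le (fun e => by positivity) p).trans_lt ?_
  rcases Int.toNat_floor_logb_eq_zero_or_pow_le (a := 1 + ε) (x := ε * Wd / h) (by linarith)
    (by positivity) with hi | hble
  · have hexact : walkWeight Wi p = Wd := by simp [Wi, b, i, hi, Wd, walkWeight]
    rw [hexact]
    nlinarith
  · have hhb : h * b ≤ ε * Wd := by
      rwa [le_div_iff₀ (by positivity), mul_comm] at hble
    calc walkWeight Wi p < Wd + h * b :=
          walkWeight_lt_add_length_mul (fun e => mul_ceil_div_lt_add hb _) hh
      _ ≤ (1 + ε) * Wd := by linarith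

/-- `G = (V,E,W)` a weighted graph with positive integer edge
weights, `ε > 0`, `b(i) = (1+ε)^i`, and rounded weights
`W_i(e) = b(i)·⌈W(e)/b(i)⌉` with distance `Wd_i`. Here `p` is a minimum-hop
shortest weighted `v`-`w` path, so `Wd(v,w) = W(p)` and `h_{v,w} = ℓ(p)`.
For `i = max{0, ⌊log_{1+ε}(ε·Wd(v,w)/h_{v,w})⌋}`,
`Wd_i(v,w) < (1+ε)·Wd(v,w)`. -/
theorem rounding_distance_bound {V : Type*} (G : SimpleGraph V)
    (W : Sym2 V → ℕ) (hW : ∀ e, 0 < W e)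
    (ε : ℝ) (hε : 0 < ε) (v w : V) (hvw : v ≠ w)
    (p : G.Walk v w)
    (hmin : ∀ q : G.Walk v w,
      walkWeight (fun e => (W e : ℝ)) p ≤ walkWeight (fun e => (W e : ℝ)) q)
    (hhop : ∀ q : G.Walk v w,
      walkWeight (fun e => (W e : ℝ)) q = walkWeight (fun e => (W e : ℝ)) p →
        p.length ≤ q.length) :
    let Wd : ℝ := walkWeight (fun e => (W e : ℝ)) p
    let h : ℕ := p.length
    let i : ℕ := (⌊Real.logb (1 + ε) (ε * Wd / h)⌋).toNat
    let b : ℝ := (1 + ε) ^ i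
    let Wi : Sym2 V → ℝ := fun e => b * (⌈(W e : ℝ) / b⌉ : ℤ)
    sInf {x : ℝ | ∃ q : G.Walk v w, x = walkWeight Wi q} < (1 + ε) * Wd :=
  rounding_distance_bound_general G W hW ε hε v w hvw p
end

section
/- Let Wd be a metric (the weighted graph distance) on V, S ⊆ V, and let s_v denote the element of S minimizing (Wd(v,s),s) lexicographically. Suppose Wd' : V×V → ℕ∪{∞} satisfies Wd'(x,y) ≥ Wd(x,y) everywhere, Wd'(v,s_v') ≤ (1+ε)Wd(v,w) for a given pair v,w (where s_v' minimizes (Wd'(v,s),s) over s∈S), Wd'(w,s_w) ≤ (1+ε)Wd(w,s_w), and Wd'(w,s_w') ≤ (1+ε)Wd(w,s_w') where s_w' minimizes (Wd'(w,s),s) over S. Then Wd(w,s_w') ≤ Wd'(w,s_w') ≤ 2(1+ε)^2·Wd(v,w) and Wd(v,s_w') ≤ 3(1+ε)^2·Wd(v,w). -/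
/-- `Wd` is the (metric) graph distance, `S ⊆ V`, and `s_u`
(resp. `s_u'`) denotes the lexicographic minimizer of `(Wd(u,s), s)`
(resp. `(Wd'(u,s), s)`) over `s ∈ S`. If `Wd' ≥ Wd` pointwise,
`Wd'(v,s_v') ≤ (1+ε)·Wd(v,w)`, `Wd'(w,s_w) ≤ (1+ε)·Wd(w,s_w)` and
`Wd'(w,s_w') ≤ (1+ε)·Wd(w,s_w')`, then
`Wd(w,s_w') ≤ Wd'(w,s_w') ≤ 2(1+ε)²·Wd(v,w)` and
`Wd(v,s_w') ≤ 3(1+ε)²·Wd(v,w)`. -/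
theorem closest_sampled_node_bounds {V : Type*} [LinearOrder V]
    (Wd Wd' : V → V → ℝ)
    (hsymm : ∀ a b, Wd a b = Wd b a)
    (htri : ∀ a b c, Wd a c ≤ Wd a b + Wd b c)
    (hnonneg : ∀ a b, 0 ≤ Wd a b)
    (S : Set V) (ε : ℝ) (hε : 0 < ε)
    (hdom : ∀ x y, Wd x y ≤ Wd' x y)
    (v w sv sv' sw sw' : V)
    (hsv : sv ∈ S) (hsv' : sv' ∈ S) (hsw : sw ∈ S) (hsw' : sw' ∈ S)
    (hminsv : ∀ t ∈ S, Wd v sv < Wd v t ∨ (Wd v sv = Wd v t ∧ sv ≤ t))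
    (hminsw : ∀ t ∈ S, Wd w sw < Wd w t ∨ (Wd w sw = Wd w t ∧ sw ≤ t))
    (hminsv' : ∀ t ∈ S, Wd' v sv' < Wd' v t ∨ (Wd' v sv' = Wd' v t ∧ sv' ≤ t))
    (hminsw' : ∀ t ∈ S, Wd' w sw' < Wd' w t ∨ (Wd' w sw' = Wd' w t ∧ sw' ≤ t))
    (h1 : Wd' v sv' ≤ (1 + ε) * Wd v w)
    (h2 : Wd' w sw ≤ (1 + ε) * Wd w sw)
    (h3 : Wd' w sw' ≤ (1 + ε) * Wd w sw') :
    Wd w sw' ≤ Wd' w sw' ∧ Wd' w sw' ≤ 2 * (1 + ε) ^ 2 * Wd v w ∧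
      Wd v sw' ≤ 3 * (1 + ε) ^ 2 * Wd v w := by
  have A : Wd v sv ≤ Wd v sv' := by
    rcases hminsv sv' hsv' with h | h
    · linarith
    · linarith [h.1]
  have B : Wd' w sw' ≤ Wd' w sw := by
    rcases hminsw' sw hsw with h | h
    · linarith
    · linarith [h.1]
  have Asv' : Wd v sv ≤ (1 + ε) * Wd v w := le_trans A (le_trans (hdom v sv') h1)
  have C : Wd w sw ≤ Wd w sv := by
    rcases hminsw sv hsv with h | h
    · linarith
    · linarith [h.1]
  have D : Wd w sv ≤ Wd w v + Wd v sv := htri w v sv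
  have hwv : Wd w v = Wd v w := hsymm w v
  have hvw0 : 0 ≤ Wd v w := hnonneg v w
  -- Wd w sw ≤ (2+ε) Wd v w
  have E : Wd w sw ≤ (2 + ε) * Wd v w := by nlinarith
  have hws0 : 0 ≤ Wd w sw := hnonneg w sw
  have F : Wd' w sw' ≤ 2 * (1 + ε) ^ 2 * Wd v w := by
    nlinarith [mul_le_mul_of_nonneg_left E (by linarith : (0:ℝ) ≤ 1 + ε),
      mul_nonneg hε.le hvw0, mul_nonneg (mul_nonneg hε.le hε.le) hvw0]
  have G : Wd w sw' ≤ Wd' w sw' := hdom w sw'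
  have H : Wd v sw' ≤ Wd v w + Wd w sw' := htri v w sw'
  refine ⟨G, F, ?_⟩
  nlinarith [mul_nonneg hε.le hvw0, mul_nonneg (mul_nonneg hε.le hε.le) hvw0]
end
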